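/- Let (Ω, 𝓕, μ) be a standard Borel probability space, T : Ω → ℝ measurable, E a standard Borel space, X : Ω → E measurable, L > 0 fixed, and H : E → (ℝ → ℝ≥0) with (x,s) ↦ H(x)(s) jointly measurable. Assume that for (μ.map X)-almost every x, the regular conditional distribution of T given X = x is absolutely continuous with respect to Lebesgue measure with density u ↦ 1_{[0,∞)}(u) · H(x)(u) · exp(−∫₀ᵘ H(x)(s) ds). Define the propensity process Θ_L : Ω → (ℝ → ℝ≥0) by Θ_L(ω)(s) = H(X(ω))(s) for s ∈ [0, L) and 0 otherwise. Then (a) for every Borel set A ⊆ [0, L), the conditional expectation of the indicator of {T ∈ A} given σ(X) equals almost surely its conditional expectation given σ(Θ_L); and (b) the conditional expectation of the indicator of {T ≥ L} given σ(X) equals almost surely its conditional expectation given σ(Θ_L). -/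

import Mathlib

/-!
Given `X`, the law of `T` has density `hazardDensity (H X)`, whose restriction to `(-∞, L)` only
involves the hazard path on `[0, L)`, i.e. `Θ_L`. So for `A ⊆ (-∞, L)`, `P(T ∈ A | X)` is a
functional of `Θ_L`, and the tower property gives the same conditional probability given
`σ(Θ_L)`. That functional integrates the path, so it is not measurable for the product σ-algebra
on path space; we evaluate it instead on a version of `Θ_L` that is jointly
`σ(Θ_L) ⊗ Borel`-measurable, obtained by integrating `Θ_L` against the conditional expectation
kernel given `σ(Θ_L)`. By Fubini, almost every path of this version agrees a.e. with that of
`Θ_L`. Part (b) is the complement of the case `A = (-∞, L)`.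
-/

open MeasureTheory ProbabilityTheory Filter Set Function
open scoped ENNReal NNReal

section CondExpKernel

variable {Ω ι : Type*} {m : MeasurableSpace Ω} [mΩ : MeasurableSpace Ω] [StandardBorelSpace Ω]
  {μ : Measure Ω} [IsFiniteMeasure μ]

lemma condExpKernel_ae_eq_indicator (hm : m ≤ mΩ) {s : Set Ω} (hs : MeasurableSet[m] s) :
    (fun ω => condExpKernel μ m ω s) =ᵐ[μ] s.indicator 1 := by
  have hind : μ⟦s | m⟧ = s.indicator 1 :=
    condExp_of_stronglyMeasurable hm (stronglyMeasurable_const.indicator hs)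
      ((integrable_const 1).indicator (hm s hs))
  filter_upwards [condExpKernel_ae_eq_condExp hm (hm s hs)] with ω hω
  rw [← ofReal_measureReal, hω, hind]
  by_cases h : ω ∈ s <;> simp [h]

lemma lintegral_condExpKernel_ae_eq (hm : m ≤ mΩ) {f : Ω → ℝ≥0∞}
    (hf : Measurable[m] f) :
    (fun ω => ∫⁻ ω', f ω' ∂condExpKernel μ m ω) =ᵐ[μ] f := by
  refine Measurable.ennreal_induction (mα := m) (motive := fun f =>
    (fun ω => ∫⁻ ω', f ω' ∂condExpKernel μ m ω) =ᵐ[μ] f) ?_ ?_ ?_ hf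
  · intro c s hs
    filter_upwards [condExpKernel_ae_eq_indicator hm hs] with ω hω
    rw [lintegral_indicator_const (hm s hs), hω]
    by_cases h : ω ∈ s <;> simp [h]
  · intro f g _ hf _ ihf ihg
    filter_upwards [ihf, ihg] with ω hωf hωg
    simp only [Pi.add_apply]
    rw [lintegral_add_left (hf.mono hm le_rfl), hωf, hωg]
  · intro f hf hmono ih
    filter_upwards [ae_all_iff.2 ih] with ω hω
    rw [lintegral_iSup (fun n => (hf n).mono hm le_rfl) hmono]
    exact iSup_congr hω

variable [MeasurableSpace ι]

lemma exists_measurable_modification (hm : m ≤ mΩ) {Z : Ω → ι → ℝ≥0}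
    (hZ : Measurable (uncurry Z)) (hZm : ∀ s, Measurable[m] (Z · s)) :
    ∃ Z' : Ω → ι → ℝ≥0, Measurable[m.prod inferInstance] (uncurry Z') ∧
      ∀ s, (Z' · s) =ᵐ[μ] (Z · s) := by
  refine ⟨fun ω s => (∫⁻ ω', Z ω' s ∂condExpKernel μ m ω).toNNReal, ?_, fun s => ?_⟩
  · have hZ' : Measurable[(m.prod inferInstance).prod mΩ]
        fun q : (Ω × ι) × Ω => (Z q.2 q.1.2 : ℝ≥0∞) :=
      (hZ.comp (measurable_snd.prodMk (measurable_snd.comp measurable_fst))).coe_nnreal_ennreal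
    exact (hZ'.lintegral_kernel_prod_right'
      (κ := Kernel.prodMkRight ι (condExpKernel μ m))).ennreal_toNNReal
  · filter_upwards [lintegral_condExpKernel_ae_eq hm (hZm s).coe_nnreal_ennreal] with ω hω
    simp [hω]

end CondExpKernel

lemma ae_ae_eq_of_forall_ae_eq {α ι β : Type*} [MeasurableSpace α] [MeasurableSpace ι]
    [MeasurableSpace β] [MeasurableEq β] {μ : Measure α} {ν : Measure ι} [SFinite μ]
    [SFinite ν] {Z Z' : α → ι → β} (hZ : Measurable (uncurry Z))
    (hZ' : Measurable (uncurry Z'))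
    (h : ∀ s, (Z · s) =ᵐ[μ] (Z' · s)) : ∀ᵐ a ∂μ, Z a =ᵐ[ν] Z' a :=
  (Measure.ae_ae_comm (p := fun a s => Z a s = Z' a s) (measurableSet_eq_fun hZ hZ')).2
    (ae_of_all _ h)

lemma measurable_intervalIntegral_prod {β : Type*} {mβ : MeasurableSpace β}
    {f : β × ℝ → ℝ} (hf : Measurable f) {a b : β → ℝ} (ha : Measurable a)
    (hb : Measurable b) :
    Measurable fun x => ∫ s in a x..b x, f (x, s) := by
  have hIoc : ∀ {a b : β → ℝ}, Measurable a → Measurable b →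
      Measurable fun x => ∫ s in Ioc (a x) (b x), f (x, s) := by
    intro a b ha hb
    have hS : MeasurableSet {q : β × ℝ | q.2 ∈ Ioc (a q.1) (b q.1)} :=
      (measurableSet_lt (ha.comp measurable_fst) measurable_snd).inter
        (measurableSet_le measurable_snd (hb.comp measurable_fst))
    simp_rw [← integral_indicator measurableSet_Ioc]
    exact ((hf.indicator hS).stronglyMeasurable.integral_prod_right' (ν := volume)).measurable
  exact (hIoc ha hb).sub (hIoc hb ha)

section HazardDensity

noncomputable def hazardDensity (h : ℝ → ℝ≥0) : ℝ → ℝ≥0∞ :=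
  (Ici 0).indicator fun v => ENNReal.ofReal (h v * Real.exp (-∫ s in (0 : ℝ)..v, (h s : ℝ)))

lemma measurable_hazardDensity {α : Type*} {mα : MeasurableSpace α} {h : α → ℝ → ℝ≥0}
    (hh : Measurable (uncurry h)) : Measurable fun p : α × ℝ => hazardDensity (h p.1) p.2 := by
  have hcum : Measurable fun p : α × ℝ => ∫ s in (0 : ℝ)..p.2, (h p.1 s : ℝ) :=
    measurable_intervalIntegral_prod
      (hh.comp ((measurable_fst.comp measurable_fst).prodMk measurable_snd)).coe_nnreal_real
      measurable_const measurable_snd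
  exact (ENNReal.measurable_ofReal.comp
    (hh.coe_nnreal_real.mul (Real.measurable_exp.comp hcum.neg))).indicator
      (measurable_snd measurableSet_Ici)

lemma hazardDensity_ae_eq {h₁ h₂ : ℝ → ℝ≥0} {L : ℝ}
    (h : h₁ =ᵐ[volume.restrict (Ico 0 L)] h₂) :
    hazardDensity h₁ =ᵐ[volume.restrict (Iio L)] hazardDensity h₂ := by
  rw [EventuallyEq, ae_restrict_iff' measurableSet_Ico] at h
  filter_upwards [ae_restrict_mem measurableSet_Iio, ae_restrict_of_ae h] with u huL hu
  by_cases hu0 : 0 ≤ u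
  · have hcum : ∫ s in (0 : ℝ)..u, (h₁ s : ℝ) = ∫ s in (0 : ℝ)..u, (h₂ s : ℝ) := by
      refine intervalIntegral.integral_congr_ae ?_
      filter_upwards [h] with s hs hsu
      rw [uIoc_of_le hu0] at hsu
      rw [hs ⟨hsu.1.le, hsu.2.trans_lt huL⟩]
    simp [hazardDensity, hu0, hu ⟨hu0, huL⟩, hcum]
  · simp [hazardDensity, hu0]

end HazardDensity

section CondExp

variable {α F : Type*} {m₁ m₂ m₀ : MeasurableSpace α} {μ : Measure[m₀] α}
  [IsFiniteMeasure μ]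

lemma condExp_ae_eq_condExp_of_aestronglyMeasurable [NormedAddCommGroup F] [NormedSpace ℝ F]
    [CompleteSpace F] {f : α → F} (h₁₂ : m₁ ≤ m₂) (h₂ : m₂ ≤ m₀)
    (hf : AEStronglyMeasurable[m₁] (μ[f | m₂]) μ) : μ[f | m₂] =ᵐ[μ] μ[f | m₁] :=
  (condExp_of_aestronglyMeasurable' (h₁₂.trans h₂) hf integrable_condExp).symm.trans
    (condExp_condExp_of_le h₁₂ h₂)

lemma condExp_indicator_compl_ae_eq (h₁ : m₁ ≤ m₀) (h₂ : m₂ ≤ m₀) {s : Set α}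
    (hs : MeasurableSet[m₀] s)
    (h : μ[s.indicator fun _ => (1 : ℝ) | m₁]
      =ᵐ[μ] μ[s.indicator fun _ => (1 : ℝ) | m₂]) :
    μ[sᶜ.indicator fun _ => (1 : ℝ) | m₁]
      =ᵐ[μ] μ[sᶜ.indicator fun _ => (1 : ℝ) | m₂] := by
  have hcompl : ∀ m ≤ m₀, μ[sᶜ.indicator fun _ => (1 : ℝ) | m]
      =ᵐ[μ] (fun _ => 1) - μ[s.indicator fun _ => (1 : ℝ) | m] := fun m hm => by
    rw [indicator_compl]
    refine (condExp_sub (integrable_const (1 : ℝ))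
      ((integrable_const (1 : ℝ)).indicator hs) m).trans ?_
    rw [condExp_const hm]
  exact (hcompl m₁ h₁).trans ((EventuallyEq.rfl.sub h).trans (hcompl m₂ h₂).symm)

end CondExp

section HazardModel

variable {Ω E : Type*} {m : MeasurableSpace Ω} [mΩ : MeasurableSpace Ω]
  [mE : MeasurableSpace E] {μ : Measure Ω} [IsProbabilityMeasure μ] {T : Ω → ℝ}
  {X : Ω → E} {H : E → ℝ → ℝ≥0}

lemma condExp_indicator_comap_ae_eq_lintegral_hazardDensity (hT : Measurable T)
    (hX : Measurable X)
    (hdens : ∀ᵐ x ∂μ.map X, condDistrib T X μ x = volume.withDensity (hazardDensity (H x)))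
    {A : Set ℝ} (hA : MeasurableSet A) :
    μ[(T ⁻¹' A).indicator fun _ => (1 : ℝ) | mE.comap X]
      =ᵐ[μ] fun ω => (∫⁻ u in A, hazardDensity (H (X ω)) u).toReal := by
  refine (condDistrib_ae_eq_condExp hX hT hA).symm.trans ?_
  filter_upwards [ae_of_ae_map hX.aemeasurable hdens] with ω hω
  rw [measureReal_def, hω, withDensity_apply _ hA]

lemma condExp_indicator_comap_ae_eq_condExp_of_hazard [StandardBorelSpace Ω]
    (hT : Measurable T) (hX : Measurable X) (hmX : m ≤ mE.comap X) {L : ℝ}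
    {Θ : Ω → ℝ → ℝ≥0}
    (hΘ : Measurable (uncurry Θ)) (hΘm : ∀ s, Measurable[m] (Θ · s))
    (hΘH : ∀ ω, ∀ s ∈ Ico 0 L, Θ ω s = H (X ω) s)
    (hdens : ∀ᵐ x ∂μ.map X, condDistrib T X μ x = volume.withDensity (hazardDensity (H x)))
    {A : Set ℝ} (hA : MeasurableSet A) (hAL : A ⊆ Iio L) :
    μ[(T ⁻¹' A).indicator fun _ => (1 : ℝ) | mE.comap X]
      =ᵐ[μ] μ[(T ⁻¹' A).indicator fun _ => (1 : ℝ) | m] := by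
  have hm : m ≤ mΩ := hmX.trans hX.comap_le
  obtain ⟨Θ', hΘ'm, hΘ'Θ⟩ := exists_measurable_modification (μ := μ) hm hΘ hΘm
  have hpaths : ∀ᵐ ω ∂μ, Θ' ω =ᵐ[volume] Θ ω :=
    ae_ae_eq_of_forall_ae_eq
      (hΘ'm.mono (sup_le_sup (MeasurableSpace.comap_mono hm) le_rfl) le_rfl) hΘ hΘ'Θ
  have hD' : StronglyMeasurable[m] fun ω => (∫⁻ u in A, hazardDensity (Θ' ω) u).toReal :=
    (@Measurable.lintegral_prod_right' Ω ℝ m _ _ _ _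
      (measurable_hazardDensity hΘ'm)).ennreal_toReal.stronglyMeasurable
  refine condExp_ae_eq_condExp_of_aestronglyMeasurable hmX hX.comap_le ⟨_, hD', ?_⟩
  refine (condExp_indicator_comap_ae_eq_lintegral_hazardDensity hT hX hdens hA).trans ?_
  filter_upwards [hpaths] with ω hω
  have hΘ'H : Θ' ω =ᵐ[volume.restrict (Ico 0 L)] H (X ω) :=
    EventuallyEq.trans (ae_restrict_of_ae hω)
      ((ae_restrict_iff' measurableSet_Ico).2 (ae_of_all _ (hΘH ω)))
  rw [lintegral_congr_ae (ae_restrict_of_ae_restrict_of_subset hAL (hazardDensity_ae_eq hΘ'H))]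

end HazardModel

theorem condexp_indicator_eq_given_propensityProcess_general
    {Ω E : Type*}
    [MeasurableSpace Ω] [StandardBorelSpace Ω]
    [MeasurableSpace E]
    (μ : Measure Ω) [IsProbabilityMeasure μ]
    (T : Ω → ℝ) (X : Ω → E) (hT : Measurable T) (hX : Measurable X)
    (L : ℝ)
    (H : E → ℝ → NNReal) (hH : Measurable fun p : E × ℝ => H p.1 p.2)
    (hdens : ∀ᵐ x ∂(μ.map X), condDistrib T X μ x =
      volume.withDensity fun u : ℝ =>
        Set.indicator (Set.Ici (0 : ℝ))
          (fun v => ENNReal.ofReal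
            ((H x v : ℝ) * Real.exp (-∫ s in (0 : ℝ)..v, (H x s : ℝ)))) u) :
    (∀ A : Set ℝ, MeasurableSet A → A ⊆ Set.Ico (0 : ℝ) L →
      μ[Set.indicator (T ⁻¹' A) (fun _ => (1 : ℝ)) | MeasurableSpace.comap X inferInstance]
        =ᵐ[μ]
      μ[Set.indicator (T ⁻¹' A) (fun _ => (1 : ℝ)) |
          MeasurableSpace.comap
            (fun ω => fun s : ℝ => if s ∈ Set.Ico (0 : ℝ) L then H (X ω) s else 0)
            inferInstance]) ∧
    (μ[Set.indicator (T ⁻¹' Set.Ici L) (fun _ => (1 : ℝ)) |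
        MeasurableSpace.comap X inferInstance]
      =ᵐ[μ]
    μ[Set.indicator (T ⁻¹' Set.Ici L) (fun _ => (1 : ℝ)) |
        MeasurableSpace.comap
          (fun ω => fun s : ℝ => if s ∈ Set.Ico (0 : ℝ) L then H (X ω) s else 0)
          inferInstance]) := by
  set g : E → ℝ → NNReal := fun x s => if s ∈ Set.Ico (0 : ℝ) L then H x s else 0
  have hg : Measurable (uncurry g) :=
    Measurable.ite (measurable_snd measurableSet_Ico) hH measurable_const
  have hΘ : Measurable (uncurry fun ω => g (X ω)) :=
    hg.comp ((hX.comp measurable_fst).prodMk measurable_snd)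
  have hgX : Measurable[MeasurableSpace.comap X inferInstance] fun ω => g (X ω) :=
    (measurable_pi_iff.2 fun s => hg.comp (measurable_id.prodMk measurable_const)).comp
      (comap_measurable X)
  have hIio : ∀ A, MeasurableSet A → A ⊆ Iio L → _ := fun A hA hAL =>
    condExp_indicator_comap_ae_eq_condExp_of_hazard (μ := μ) hT hX hgX.comap_le hΘ
      (fun s => (measurable_pi_apply s).comp (comap_measurable fun ω => g (X ω)))
      (fun ω s hs => if_pos hs) hdens hA hAL
  refine ⟨fun A hA hAL => hIio A hA (hAL.trans Ico_subset_Iio_self), ?_⟩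
  rw [← compl_Iio, preimage_compl]
  exact condExp_indicator_compl_ae_eq hX.comap_le (hgX.comap_le.trans hX.comap_le)
    (hT measurableSet_Iio) (hIio _ measurableSet_Iio subset_rfl)

/-- Key intermediate step in the proof of Proposition 1: under the hazard model for treatment
assignment, (a) for every Borel set `A ⊆ [0, L)` the conditional expectation of the indicator of
`{T ∈ A}` given `σ(X)` equals a.s. its conditional expectation given `σ(Θ_L)`, and (b) the same
holds for the indicator of `{T ≥ L}`. -/
theorem condexp_indicator_eq_given_propensityProcess
    {Ω E : Type*}
    [MeasurableSpace Ω] [StandardBorelSpace Ω] [Nonempty Ω]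
    [MeasurableSpace E] [StandardBorelSpace E]
    (μ : Measure Ω) [IsProbabilityMeasure μ]
    (T : Ω → ℝ) (X : Ω → E) (hT : Measurable T) (hX : Measurable X)
    (L : ℝ) (hL : 0 < L)
    (H : E → ℝ → NNReal) (hH : Measurable fun p : E × ℝ => H p.1 p.2)
    (hdens : ∀ᵐ x ∂(μ.map X), condDistrib T X μ x =
      volume.withDensity fun u : ℝ =>
        Set.indicator (Set.Ici (0 : ℝ))
          (fun v => ENNReal.ofReal
            ((H x v : ℝ) * Real.exp (-∫ s in (0 : ℝ)..v, (H x s : ℝ)))) u) :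
    (∀ A : Set ℝ, MeasurableSet A → A ⊆ Set.Ico (0 : ℝ) L →
      μ[Set.indicator (T ⁻¹' A) (fun _ => (1 : ℝ)) | MeasurableSpace.comap X inferInstance]
        =ᵐ[μ]
      μ[Set.indicator (T ⁻¹' A) (fun _ => (1 : ℝ)) |
          MeasurableSpace.comap
            (fun ω => fun s : ℝ => if s ∈ Set.Ico (0 : ℝ) L then H (X ω) s else 0)
            inferInstance]) ∧
    (μ[Set.indicator (T ⁻¹' Set.Ici L) (fun _ => (1 : ℝ)) |
        MeasurableSpace.comap X inferInstance]
      =ᵐ[μ]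
    μ[Set.indicator (T ⁻¹' Set.Ici L) (fun _ => (1 : ℝ)) |
        MeasurableSpace.comap
          (fun ω => fun s : ℝ => if s ∈ Set.Ico (0 : ℝ) L then H (X ω) s else 0)
          inferInstance]) :=
  condexp_indicator_eq_given_propensityProcess_general μ T X hT hX L H hH hdens
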